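/- Let f(x) = q_n·log(1 + h_n(P−x)/(h_n·x + σ)) + q_m·log(1 + h_m·x/σ) with positive constants q_n, q_m, h_n, h_m, P, σ. If for all x ∈ [0,P] one has q_n·h_n²/(h_n·x + σ)² ≤ q_m·h_m²/(h_m·x + σ)², then f is concave on [0,P]. -/

import Mathlib

/-!
Up to an additive constant, `f x = q_m log (h_m x + σ) - q_n log (h_n x + σ)`, whose second
derivative is `q_n h_n² / (h_n x + σ)² - q_m h_m² / (h_m x + σ)²`; the hypothesis says exactly
that this is nonpositive.
-/

open Real

section AffineLog

variable {a b x : ℝ}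

theorem hasDerivAt_mul_log_affine (q : ℝ) (hx : a * x + b ≠ 0) :
    HasDerivAt (fun y => q * log (a * y + b)) (q * a / (a * x + b)) x := by
  have hlin : HasDerivAt (fun y => a * y + b) a x := by
    simpa using ((hasDerivAt_id x).const_mul a).add_const b
  simpa [mul_div_assoc] using (hlin.log hx).const_mul q

theorem hasDerivAt_mul_div_affine (q : ℝ) (hx : a * x + b ≠ 0) :
    HasDerivAt (fun y => q * a / (a * y + b)) (-(q * a ^ 2 / (a * x + b) ^ 2)) x := by
  have hlin : HasDerivAt (fun y => a * y + b) a x := by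
    simpa using ((hasDerivAt_id x).const_mul a).add_const b
  exact ((hasDerivAt_const x (q * a)).div hlin hx).congr_deriv (by ring)

theorem continuousOn_mul_log_affine (q : ℝ) {s : Set ℝ} (hs : ∀ y ∈ s, a * y + b ≠ 0) :
    ContinuousOn (fun y => q * log (a * y + b)) s :=
  continuousOn_const.mul (continuousOn_log.comp (by fun_prop) hs)

end AffineLog

theorem concaveOn_mul_log_affine_sub_mul_log_affine {s : Set ℝ} (hs : Convex ℝ s)
    {p q a b c d : ℝ} (hab : ∀ x ∈ s, a * x + b ≠ 0) (hcd : ∀ x ∈ s, c * x + d ≠ 0)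
    (hcurv : ∀ x ∈ interior s, p * c ^ 2 / (c * x + d) ^ 2 ≤ q * a ^ 2 / (a * x + b) ^ 2) :
    ConcaveOn ℝ s (fun x => q * log (a * x + b) - p * log (c * x + d)) := by
  apply concaveOn_of_hasDerivWithinAt2_nonpos hs
    (f' := fun x => q * a / (a * x + b) - p * c / (c * x + d))
    (f'' := fun x => -(q * a ^ 2 / (a * x + b) ^ 2) - -(p * c ^ 2 / (c * x + d) ^ 2))
  · exact (continuousOn_mul_log_affine q hab).sub (continuousOn_mul_log_affine p hcd)
  · intro x hx
    have hxs := interior_subset hx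
    exact ((hasDerivAt_mul_log_affine q (hab x hxs)).sub
      (hasDerivAt_mul_log_affine p (hcd x hxs))).hasDerivWithinAt
  · intro x hx
    have hxs := interior_subset hx
    exact ((hasDerivAt_mul_div_affine q (hab x hxs)).sub
      (hasDerivAt_mul_div_affine p (hcd x hxs))).hasDerivWithinAt
  · intro x hx
    linarith [hcurv x hx]

theorem stmt_1_general (qn qm hn hm P σ : ℝ)
    (hhn : 0 < hn) (hhm : 0 < hm)
    (hσ : 0 < σ)
    (f : ℝ → ℝ)
    (hf : f = fun x => qn * Real.log (1 + hn * (P - x) / (hn * x + σ))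
        + qm * Real.log (1 + hm * x / σ))
    (hcond : ∀ x ∈ Set.Icc (0 : ℝ) P,
      qn * hn ^ 2 / (hn * x + σ) ^ 2 ≤ qm * hm ^ 2 / (hm * x + σ) ^ 2) :
    ConcaveOn ℝ (Set.Icc (0 : ℝ) P) f := by
  have affine_pos : ∀ {h : ℝ}, 0 < h → ∀ x ∈ Set.Icc (0 : ℝ) P, 0 < h * x + σ :=
    fun hh x hx => by nlinarith [hx.1]
  have hconc := (concaveOn_mul_log_affine_sub_mul_log_affine (convex_Icc 0 P)
    (fun x hx => (affine_pos hhm x hx).ne') (fun x hx => (affine_pos hhn x hx).ne')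
    (fun x hx => hcond x (interior_subset hx))).add_const
    (qn * log (hn * P + σ) - qm * log σ)
  refine hconc.congr fun x hx => ?_
  have hnx := affine_pos hhn x hx
  have hnP : 0 < hn * P + σ := affine_pos hhn P ⟨hx.1.trans hx.2, le_rfl⟩
  have hn_quot : 1 + hn * (P - x) / (hn * x + σ) = (hn * P + σ) / (hn * x + σ) := by
    field_simp; ring
  have hm_quot : 1 + hm * x / σ = (hm * x + σ) / σ := by
    field_simp; ring
  rw [hf]
  simp only [Pi.add_apply, hn_quot, hm_quot, log_div hnP.ne' hnx.ne',
    log_div (affine_pos hhm x hx).ne' hσ.ne']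
  ring

theorem stmt_1 (qn qm hn hm P σ : ℝ)
    (hqn : 0 < qn) (hqm : 0 < qm) (hhn : 0 < hn) (hhm : 0 < hm)
    (hP : 0 < P) (hσ : 0 < σ)
    (f : ℝ → ℝ)
    (hf : f = fun x => qn * Real.log (1 + hn * (P - x) / (hn * x + σ))
        + qm * Real.log (1 + hm * x / σ))
    (hcond : ∀ x ∈ Set.Icc (0 : ℝ) P,
      qn * hn ^ 2 / (hn * x + σ) ^ 2 ≤ qm * hm ^ 2 / (hm * x + σ) ^ 2) :
    ConcaveOn ℝ (Set.Icc (0 : ℝ) P) f :=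
  stmt_1_general qn qm hn hm P σ hhn hhm hσ f hf hcond
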